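/- Let X ⊆ ℝ^d be infinite, let a < b, and let F be a class of functions X → ℝ such that the associated threshold classifiers {x ↦ 1[Φ(x) > (a+b)/2] : Φ ∈ F} have finite VC dimension. Then there exists a continuous function f : X → [a,b] such that every Φ ∈ F satisfies ‖Φ - f‖_{L^∞(X)} ≥ (b-a)/2. -/
import Mathlib


/-- Existence of a hard continuous target: if the threshold classifiers
`x ↦ 1[Φ(x) > (a+b)/2]` (for `Φ` in a class `F`) over an infinite set
`X ⊆ ℝ^d` have finite VC dimension, then there is a continuous function
`f : X → [a,b]` whose uniform distance to every `Φ ∈ F` is at least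
`(b-a)/2` (expressed as: for each `ε > 0` some point has error `> (b-a)/2 - ε`). -/
theorem hard_function_exists (d : ℕ) (X : Set (Fin d → ℝ)) (hX : X.Infinite)
    (a b : ℝ) (hab : a < b) (F : Set ((Fin d → ℝ) → ℝ))
    (hVC : ∃ K : ℕ, ∀ s : Finset (Fin d → ℝ), ↑s ⊆ X →
      (∀ y : (Fin d → ℝ) → Bool,
        ∃ Φ ∈ F, ∀ x ∈ s, ((a + b) / 2 < Φ x ↔ y x = true)) →
      s.card ≤ K) :
    ∃ f : (Fin d → ℝ) → ℝ, ContinuousOn f X ∧ (∀ x ∈ X, f x ∈ Set.Icc a b) ∧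
      ∀ Φ ∈ F, ∀ ε > (0:ℝ), ∃ x ∈ X, (b - a) / 2 - ε < |Φ x - f x| := by
  obtain ⟨K, hK⟩ := hVC
  obtain ⟨s, hsX, hscard⟩ := hX.exists_subset_card_eq (K + 1)
  have hnot : ¬ (∀ y : (Fin d → ℝ) → Bool,
      ∃ Φ ∈ F, ∀ x ∈ s, ((a + b) / 2 < Φ x ↔ y x = true)) := by
    intro h
    have := hK s hsX h
    omega
  push_neg at hnot
  obtain ⟨y, hy⟩ := hnot
  set A : Set (Fin d → ℝ) := ↑(s.filter (fun p => y p = false)) with hA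
  set B : Set (Fin d → ℝ) := ↑(s.filter (fun p => y p = true)) with hB
  have hAc : IsClosed A := (s.filter (fun p => y p = false)).finite_toSet.isClosed
  have hBc : IsClosed B := (s.filter (fun p => y p = true)).finite_toSet.isClosed
  have hdisj : Disjoint A B := by
    rw [Set.disjoint_left]
    intro p hp hp'
    simp only [hA, hB, Finset.coe_filter, Set.mem_setOf_eq] at hp hp'
    simp [hp.2] at hp'
  obtain ⟨g, hg0, hg1, hg01⟩ := exists_continuous_zero_one_of_isClosed hAc hBc hdisj
  refine ⟨fun x => a + (b - a) * g x, ?_, ?_, ?_⟩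
  · exact (continuous_const.add (continuous_const.mul g.continuous)).continuousOn
  · intro x _
    have h1 := (hg01 x).1
    have h2 := (hg01 x).2
    simp only
    constructor
    · nlinarith
    · nlinarith
  · intro Φ hΦ ε hε
    obtain ⟨x, hxs, hx⟩ := hy Φ hΦ
    refine ⟨x, hsX hxs, ?_⟩
    cases hyx : y x with
    | true =>
      have hgx : g x = 1 := hg1 (by simp [hB, hxs, hyx])
      have hΦx : Φ x ≤ (a + b) / 2 := by
        rcases hx with ⟨_, h2⟩ | ⟨h1, _⟩
        · exact absurd hyx h2
        · exact h1
      simp only [hgx]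
      rw [abs_sub_comm, abs_of_nonneg (by linarith)]
      linarith
    | false =>
      have hgx : g x = 0 := hg0 (by simp [hA, hxs, hyx])
      have hΦx : (a + b) / 2 < Φ x := by
        rcases hx with ⟨h1, _⟩ | ⟨_, h2⟩
        · exact h1
        · simp [hyx] at h2
      simp only [hgx]
      rw [abs_of_nonneg (by linarith)]
      linarith
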